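/- arXiv:1907.11416 — 2 statements merged into one kernel-verified Lean document; each statement's English description precedes it below -/
import Mathlib

section
/- Let G = (V, E) be a simple undirected graph with V = {v_1, …, v_n}, let m ≤ ℓ and r be positive integers with ℓ, r < n, and let G' be the graph constructed from G as described. If L is any 1-distance m-tuple (ℓ, r)-dominating set of G', then |L ∩ (V² ∪ V³)| ≥ ℓ. -/
open Set

/-- Closed `d`-distance neighborhood `N^d_G[v]`: the set of vertices at shortest-path
distance at most `d` from `v` in `G`. -/
def closedNbhd {V : Type*} (G : SimpleGraph V) (d : ℕ) (v : V) : Set V :=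
  {u | G.Reachable u v ∧ G.dist u v ≤ d}

/-- `S` is a `d`-distance `m`-tuple `(ℓ, r)`-dominating set of `G`:
(i) every vertex has at least `m` vertices of `S` in its closed `d`-neighborhood, and
(ii) for every set `U` of `r` vertices, the union of the closed `d`-neighborhoods of the
vertices of `U` contains at least `ℓ` vertices of `S`. -/
def IsDistTupleDomSet {V : Type*} (G : SimpleGraph V) (d m ℓ r : ℕ) (S : Set V) : Prop :=
  (∀ v : V, m ≤ (closedNbhd G d v ∩ S).ncard) ∧
  (∀ U : Set V, U.ncard = r → ℓ ≤ ((⋃ u ∈ U, closedNbhd G d u) ∩ S).ncard)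

/-- Adjacency of the graph `G'` built from `G`: `V¹` is a copy of `V` retaining the edges of
`G` (encoded as `Sum.inl`), `V² = Fin (ℓ - 1)` (encoded as `Sum.inr ∘ Sum.inl`) induces a
clique joined completely to `V¹`, and `V³ = Fin r` (encoded as `Sum.inr ∘ Sum.inr`) is joined
completely to `V²`. -/
def primeAdj {V : Type*} (G : SimpleGraph V) (ℓ r : ℕ) :
    V ⊕ (Fin (ℓ - 1) ⊕ Fin r) → V ⊕ (Fin (ℓ - 1) ⊕ Fin r) → Prop
  | Sum.inl a, Sum.inl b => G.Adj a b
  | Sum.inl _, Sum.inr (Sum.inl _) => True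
  | Sum.inr (Sum.inl _), Sum.inl _ => True
  | Sum.inr (Sum.inl a), Sum.inr (Sum.inl b) => a ≠ b
  | Sum.inr (Sum.inl _), Sum.inr (Sum.inr _) => True
  | Sum.inr (Sum.inr _), Sum.inr (Sum.inl _) => True
  | _, _ => False

/-- The graph `G' = (V¹ ∪ V² ∪ V³, E¹ ∪ E² ∪ E³ ∪ E⁴)` constructed from `G`. -/
def Gprime {V : Type*} (G : SimpleGraph V) (ℓ r : ℕ) :
    SimpleGraph (V ⊕ (Fin (ℓ - 1) ⊕ Fin r)) where
  Adj := primeAdj G ℓ r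
  symm := by
    constructor
    rintro (a | b | c) (a' | b' | c') h <;> simp_all [primeAdj]
    · exact h.symm
    · exact Ne.symm h
  loopless := by
    constructor
    rintro (a | b | c) h <;> simp_all [primeAdj]

/-!
Every vertex of `V³` has its closed neighborhood inside `V² ∪ V³`, so applying condition (ii)
to the `r`-set `U = V³` puts at least `ℓ` vertices of `L` into `V² ∪ V³`.
-/

theorem mem_closedNbhd_one_iff {V : Type*} {G : SimpleGraph V} {u v : V} :
    u ∈ closedNbhd G 1 v ↔ u = v ∨ G.Adj u v := by
  refine ⟨fun ⟨hreach, hdist⟩ => ?_, ?_⟩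
  · rcases Nat.le_one_iff_eq_zero_or_eq_one.mp hdist with h | h
    · exact .inl (hreach.dist_eq_zero_iff.mp h)
    · exact .inr (SimpleGraph.dist_eq_one_iff_adj.mp h)
  · rintro (rfl | hadj)
    · exact ⟨.rfl, by simp⟩
    · exact ⟨hadj.reachable, (SimpleGraph.dist_eq_one_iff_adj.mpr hadj).le⟩

theorem IsDistTupleDomSet.le_ncard_inter {V : Type*} {G : SimpleGraph V} {d m ℓ r : ℕ}
    {S T U : Set V} (hS : IsDistTupleDomSet G d m ℓ r S) (hU : U.ncard = r)
    (hUT : ∀ u ∈ U, closedNbhd G d u ⊆ T) (hT : T.Finite) :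
    ℓ ≤ (S ∩ T).ncard := by
  refine (hS.2 U hU).trans (ncard_le_ncard ?_ (hT.subset inter_subset_right))
  rw [inter_comm]
  exact inter_subset_inter_right S (iUnion₂_subset hUT)

section Gprime

variable {V : Type*} (G : SimpleGraph V) (ℓ r : ℕ)

/-- The third layer `V³` of `G'`. -/
def thirdLayer : Set (V ⊕ (Fin (ℓ - 1) ⊕ Fin r)) :=
  range fun i : Fin r => Sum.inr (Sum.inr i)

theorem ncard_thirdLayer : (thirdLayer (V := V) ℓ r).ncard = r := by
  rw [thirdLayer, ← image_univ, ncard_image_of_injective _ (fun a b h => by simpa using h),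
    ncard_univ, Nat.card_eq_fintype_card, Fintype.card_fin]

theorem closedNbhd_one_Gprime_subset_range_inr {u} (hu : u ∈ thirdLayer (V := V) ℓ r) :
    closedNbhd (Gprime G ℓ r) 1 u ⊆ range Sum.inr := by
  obtain ⟨i, rfl⟩ := hu
  rintro (a | b) hx
  · rcases mem_closedNbhd_one_iff.mp hx with h | h
    · cases h
    · exact h.elim
  · exact mem_range_self b

end Gprime

theorem stmt_1_general {V : Type*} (G : SimpleGraph V) (m ℓ r : ℕ)
    (L : Set (V ⊕ (Fin (ℓ - 1) ⊕ Fin r)))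
    (hL : IsDistTupleDomSet (Gprime G ℓ r) 1 m ℓ r L) :
    ℓ ≤ (L ∩ Set.range Sum.inr).ncard :=
  hL.le_ncard_inter (ncard_thirdLayer ℓ r)
    (fun _ hu => closedNbhd_one_Gprime_subset_range_inr G ℓ r hu) (finite_range _)

/-- If `L` is any 1-distance `m`-tuple `(ℓ, r)`-dominating set of `G'`, then
`|L ∩ (V² ∪ V³)| ≥ ℓ` (here `V² ∪ V³ = Set.range Sum.inr`). -/
theorem stmt_1 {V : Type*} [Fintype V] (G : SimpleGraph V) (m ℓ r : ℕ)
    (hm : 0 < m) (hl : 0 < ℓ) (hr : 0 < r) (hml : m ≤ ℓ)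
    (hln : ℓ < Fintype.card V) (hrn : r < Fintype.card V)
    (L : Set (V ⊕ (Fin (ℓ - 1) ⊕ Fin r)))
    (hL : IsDistTupleDomSet (Gprime G ℓ r) 1 m ℓ r L) :
    ℓ ≤ (L ∩ Set.range Sum.inr).ncard :=
  stmt_1_general G m ℓ r L hL
end

section
/- Let G = (V, E) be a simple undirected graph with V = {v_1, …, v_n}, let m ≤ ℓ and r be positive integers with ℓ, r < n, and let G' be the graph constructed from G as described. Let L be a 1-distance m-tuple (ℓ, r)-dominating set of G' and set D = {v_i ∈ V : v_i¹ ∈ L}. Then every subset U¹ ⊆ V satisfying (⋃_{u ∈ U¹} N¹_G[u]) ∩ D = ∅ has |U¹| ≤ r − 1. -/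
open Set

/- If `U` had `r` vertices, their copies in `V¹` would form an `r`-set of `G'` whose closed
neighbourhoods meet `L` only inside `V²`: the `V¹`-part is the `G`-neighbourhood, which
misses `D`, and `V³` is not adjacent to `V¹`. So the domination condition would give
`ℓ ≤ |V²| = ℓ - 1`. -/

section

variable {V : Type*}

theorem mem_closedNbhd_one {G : SimpleGraph V} {u v : V} :
    u ∈ closedNbhd G 1 v ↔ u = v ∨ G.Adj u v := by
  constructor
  · rintro ⟨hreach, hdist⟩
    by_cases huv : u = v
    · exact Or.inl huv
    · have hpos : G.dist u v ≠ 0 := fun h => huv (hreach.dist_eq_zero_iff.mp h)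
      exact Or.inr (SimpleGraph.dist_eq_one_iff_adj.mp (by omega))
  · rintro (rfl | hadj)
    · exact ⟨SimpleGraph.Reachable.refl u, by simp⟩
    · exact ⟨hadj.reachable, (SimpleGraph.dist_eq_one_iff_adj.mpr hadj).le⟩

variable (G : SimpleGraph V) (ℓ r : ℕ)

theorem closedNbhd_one_Gprime_inl_subset (u : V) :
    closedNbhd (Gprime G ℓ r) 1 (.inl u) ⊆
      Sum.inl '' closedNbhd G 1 u ∪ range (Sum.inr ∘ Sum.inl) := by
  intro w hw
  rw [mem_closedNbhd_one] at hw
  rcases w with b | i | j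
  · exact Or.inl ⟨b, mem_closedNbhd_one.mpr (hw.imp (fun h => Sum.inl_injective h) id), rfl⟩
  · exact Or.inr ⟨i, rfl⟩
  · simp only [reduceCtorEq, false_or] at hw
    exact hw.elim

variable {G ℓ r}

theorem ncard_biUnion_closedNbhd_Gprime_inl_inter_le {L : Set (V ⊕ (Fin (ℓ - 1) ⊕ Fin r))}
    {U : Set V} (hU : (⋃ u ∈ U, closedNbhd G 1 u) ∩ {v | Sum.inl v ∈ L} = ∅) :
    ((⋃ u ∈ Sum.inl '' U, closedNbhd (Gprime G ℓ r) 1 u) ∩ L).ncard ≤ ℓ - 1 := by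
  have hsub : (⋃ u ∈ Sum.inl '' U, closedNbhd (Gprime G ℓ r) 1 u) ∩ L ⊆
      range (Sum.inr ∘ Sum.inl) := by
    rintro w ⟨hw, hwL⟩
    rw [biUnion_image, mem_iUnion₂] at hw
    obtain ⟨u, hu, hw⟩ := hw
    rcases closedNbhd_one_Gprime_inl_subset G ℓ r u hw with ⟨b, hb, rfl⟩ | hV₂
    · exact absurd hU (nonempty_iff_ne_empty.mp ⟨b, mem_biUnion hu hb, hwL⟩)
    · exact hV₂
  calc _ ≤ (range (Sum.inr ∘ Sum.inl : Fin (ℓ - 1) → V ⊕ (Fin (ℓ - 1) ⊕ Fin r))).ncard :=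
        ncard_le_ncard hsub (finite_range _)
    _ = ℓ - 1 := by
        rw [ncard_range_of_injective (Sum.inr_injective.comp Sum.inl_injective)]
        simp

end

theorem stmt_2_general {V : Type*} (G : SimpleGraph V) (m ℓ r : ℕ)
    (hl : 0 < ℓ)
    (L : Set (V ⊕ (Fin (ℓ - 1) ⊕ Fin r)))
    (hL : IsDistTupleDomSet (Gprime G ℓ r) 1 m ℓ r L)
    (D : Set V) (hD : D = {v : V | Sum.inl v ∈ L}) :
    ∀ U : Set V, (⋃ u ∈ U, closedNbhd G 1 u) ∩ D = ∅ → U.ncard ≤ r - 1 := by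
  subst hD
  intro U hU
  by_contra! hlarge
  obtain ⟨U', hU'U, hU'card⟩ := exists_subset_card_eq (show r ≤ U.ncard by omega)
  have hU' : (⋃ u ∈ U', closedNbhd G 1 u) ∩ {v | Sum.inl v ∈ L} = ∅ :=
    subset_empty_iff.mp (hU ▸ inter_subset_inter_left _ (biUnion_subset_biUnion_left hU'U))
  have hdom := hL.2 (Sum.inl '' U') (by rw [ncard_image_of_injective _ Sum.inl_injective, hU'card])
  have hbound := ncard_biUnion_closedNbhd_Gprime_inl_inter_le hU'
  omega

/-- If `L` is a 1-distance `m`-tuple `(ℓ, r)`-dominating set of `G'` and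
`D = {vᵢ ∈ V : vᵢ¹ ∈ L}`, then every subset `U¹ ⊆ V` with `(⋃_{u ∈ U¹} N¹_G[u]) ∩ D = ∅`
satisfies `|U¹| ≤ r - 1`. -/
theorem stmt_2 {V : Type*} [Fintype V] (G : SimpleGraph V) (m ℓ r : ℕ)
    (hm : 0 < m) (hl : 0 < ℓ) (hr : 0 < r) (hml : m ≤ ℓ)
    (hln : ℓ < Fintype.card V) (hrn : r < Fintype.card V)
    (L : Set (V ⊕ (Fin (ℓ - 1) ⊕ Fin r)))
    (hL : IsDistTupleDomSet (Gprime G ℓ r) 1 m ℓ r L)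
    (D : Set V) (hD : D = {v : V | Sum.inl v ∈ L}) :
    ∀ U : Set V, (⋃ u ∈ U, closedNbhd G 1 u) ∩ D = ∅ → U.ncard ≤ r - 1 :=
  stmt_2_general G m ℓ r hl L hL D hD
end
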